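/- Suppose n ≥ 100 and L ≤ (1/8)·(ln n/n)^(1/3), and fix the public ratings so that neither event B4 nor event B5 occurs. Then the conditional expectation, over the independent uniform private scores, of the number of men m_i such that for every rank j the match (m_i, w_j) gives m_i a loss exceeding L or gives w_j a loss exceeding L, is at least n^(7/8). -/

import Mathlib

open MeasureTheory

noncomputable section

/-- The uniform probability measure on `[0,1]`. -/
def unif : Measure ℝ := volume.restrict (Set.Icc (0:ℝ) 1)

/-- Joint law of all private scores: men's scores for women and women's scores for
men, all i.i.d. uniform on `[0,1]`. -/
def scoresMeasure (n : ℕ) :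
    Measure ((Fin n → Fin n → ℝ) × (Fin n → Fin n → ℝ)) :=
  (Measure.pi fun _ => Measure.pi fun _ => unif).prod
    (Measure.pi fun _ => Measure.pi fun _ => unif)

/-- 0-indexed rank: the number of agents with strictly larger rating. -/
def rankOf {n : ℕ} (r : Fin n → ℝ) (a : Fin n) : ℕ :=
  (Finset.univ.filter fun b => r a < r b).card

/-- Number of agents whose rating lies in the closed interval with endpoints `s` and `t`. -/
def countBetween {n : ℕ} (r : Fin n → ℝ) (s t : ℝ) : ℕ :=
  (Finset.univ.filter fun m => min s t ≤ r m ∧ r m ≤ max s t).card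

/-- Event B4 (see the paper). -/
def EventB4 (n : ℕ) (L : ℝ) (rM rW : Fin n → ℝ) : Prop :=
  ∃ a a' b b' : Fin n, a ≠ a' ∧
    rankOf rM a = rankOf rW b ∧ rankOf rM a' = rankOf rW b' ∧
    ((|rM a - rM a'| ≤ 4*L ∧
      ¬ (2 + |rM a - rM a'| * ((n:ℝ)-2) - L*((n:ℝ)-2) <
           (countBetween rM (rM a) (rM a') : ℝ) ∧
         (countBetween rM (rM a) (rM a') : ℝ) <
           2 + |rM a - rM a'| * ((n:ℝ)-2) + L*((n:ℝ)-2))) ∨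
     (|rW b - rW b'| ≤ 4*L ∧
      ¬ (2 + |rW b - rW b'| * ((n:ℝ)-2) - L*((n:ℝ)-2) <
           (countBetween rW (rW b) (rW b') : ℝ) ∧
         (countBetween rW (rW b) (rW b') : ℝ) <
           2 + |rW b - rW b'| * ((n:ℝ)-2) + L*((n:ℝ)-2))))

/-- Event B5 (see the paper). -/
def EventB5 (n : ℕ) (L : ℝ) (rM rW : Fin n → ℝ) : Prop :=
  ∃ a a' b b' : Fin n, a ≠ a' ∧
    rankOf rM a = rankOf rW b ∧ rankOf rM a' = rankOf rW b' ∧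
    ((4*L < |rW b - rW b'| ∧
        (countBetween rW (rW b) (rW b') : ℝ) ≤ 2 + 3*L*((n:ℝ)-2)) ∨
     (4*L < |rM a - rM a'| ∧
        (countBetween rM (rM a) (rM a') : ℝ) ≤ 2 + 3*L*((n:ℝ)-2)))

/-!
Fix a man `a`, aligned with the woman `σ a`. For a woman `b`, aligned with the man `σ⁻¹ b`, the
match `(a, b)` costs both a loss of at most `L` with probability `p_b ≤ (2L - Y)⁺ (2L + X)⁺`, where
`X = r^M_a - r^M_{σ⁻¹ b}` and `Y = r^W_{σ a} - r^W_b` have the same sign. Let `d` be the rank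
distance between `b` and `σ a` and `t = (d - 1)/(n - 2)`. Outside B4 ∪ B5 a gap `|X|` or `|Y|` of
at most `4L` is within `L` of `t`, and a larger one forces `t > 3L`; this gives
`p_b ≤ (9L² - t²)⁺`. So `p_b ≤ 9L²`, `p_b ≤ 5L²` once `d > 2L(n - 2) + 1`, and `p_b = 0` once
`d > 3L(n - 2) + 1`; as at most two women share a rank distance, `∑_b p_b ≤ 46 L³ n + 37 L²`,
which the bound on `L` makes at most `(log n)/8.88`. The scores for different women are
independent, so `a` is blocked by every woman with probability
`∏_b (1 - p_b) ≥ exp(-1.11 ∑_b p_b) ≥ n^(-1/8)`; summing over the `n` men gives `n^(7/8)`.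
-/

open Real Finset

section Rank

variable {n : ℕ} {r s : Fin n → ℝ}

lemma rankOf_lt_rankOf {a b : Fin n} (h : r b < r a) : rankOf r a < rankOf r b := by
  refine card_lt_card ⟨fun c hc => ?_, fun hsub => ?_⟩
  · simp only [mem_filter, mem_univ, true_and] at hc ⊢
    exact h.trans hc
  · simpa using hsub (by simpa using h : a ∈ univ.filter fun c => r b < r c)

lemma rankOf_lt_rankOf_iff (hr : Function.Injective r) {a b : Fin n} :
    rankOf r a < rankOf r b ↔ r b < r a := by
  refine ⟨fun h => ?_, rankOf_lt_rankOf⟩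
  rcases lt_trichotomy (r b) (r a) with h' | h' | h'
  · exact h'
  · rw [hr h'] at h
    exact absurd h (lt_irrefl _)
  · exact absurd h (rankOf_lt_rankOf h').asymm

lemma rankOf_injective (hr : Function.Injective r) : Function.Injective (rankOf r) := by
  intro a b h
  by_contra hne
  rcases (hr.ne hne).lt_or_gt with h' | h'
  · exact (rankOf_lt_rankOf h').ne' h
  · exact (rankOf_lt_rankOf h').ne h

lemma rankOf_lt (a : Fin n) : rankOf r a < n :=
  show #(univ.filter fun b => r a < r b) < n from
  (card_lt_card (filter_ssubset.mpr ⟨a, mem_univ a, lt_irrefl (r a)⟩)).trans_eq (card_fin n)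

def rankEquiv (hr : Function.Injective r) : Fin n ≃ Fin n :=
  Equiv.ofBijective (fun a => ⟨rankOf r a, rankOf_lt a⟩) <|
    Finite.injective_iff_bijective.mp fun _ _ h => rankOf_injective hr (Fin.val_eq_of_eq h)

def alignment (hr : Function.Injective r) (hs : Function.Injective s) :
    Fin n ≃ Fin n :=
  (rankEquiv hr).trans (rankEquiv hs).symm

lemma rankOf_eq_rankOf_iff (hr : Function.Injective r) (hs : Function.Injective s)
    {a b : Fin n} : rankOf r a = rankOf s b ↔ b = alignment hr hs a := by
  rw [alignment, Equiv.trans_apply, Equiv.eq_symm_apply, Fin.ext_iff, eq_comm]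
  rfl

lemma countBetween_add_rankOf (hr : Function.Injective r) {a b : Fin n} (h : r a < r b) :
    countBetween r (r a) (r b) + rankOf r b = rankOf r a + 1 := by
  simp only [countBetween, rankOf, min_eq_left h.le, max_eq_right h.le, card_filter]
  have hself : ∑ m, (if a = m then 1 else 0) = 1 := by simp
  rw [← sum_add_distrib, ← hself, ← sum_add_distrib]
  refine sum_congr rfl fun m _ => ?_
  have : r m = r a ↔ a = m := ⟨fun h => (hr h).symm, fun h => h ▸ rfl⟩
  split_ifs <;> grind

lemma countBetween_eq_abs_sub (hr : Function.Injective r) {a b : Fin n} (hab : a ≠ b) :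
    (countBetween r (r a) (r b) : ℝ) = |(rankOf r a : ℝ) - rankOf r b| + 1 := by
  wlog h : r a < r b generalizing a b
  · rw [countBetween, min_comm, max_comm, abs_sub_comm]
    exact this hab.symm ((hr.ne hab.symm).lt_of_le (not_lt.mp h))
  have hsum : (countBetween r (r a) (r b) : ℝ) + rankOf r b = rankOf r a + 1 := by
    exact_mod_cast countBetween_add_rankOf hr h
  have hle : (rankOf r b : ℝ) ≤ rankOf r a := by exact_mod_cast (rankOf_lt_rankOf h).le
  rw [abs_of_nonneg (sub_nonneg.mpr hle)]
  linarith

end Rank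

section Counting

variable {ι : Type*} [Fintype ι]

lemma card_filter_mem_Icc_le {f : ι → ℕ} (hf : Function.Injective f) {x y : ℝ} (hxy : x ≤ y) :
    (#{i | x ≤ f i ∧ (f i : ℝ) ≤ y} : ℝ) ≤ y - x + 1 := by
  by_cases hy : 0 ≤ y
  · have hcard : #{i | x ≤ f i ∧ (f i : ℝ) ≤ y} ≤ #(Icc ⌈x⌉₊ ⌊y⌋₊) :=
      card_le_card_of_injOn f (fun i hi => by
        simp only [coe_filter, mem_univ, true_and, Set.mem_ofPred_eq, coe_Icc, Set.mem_Icc] at hi ⊢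
        exact ⟨Nat.ceil_le.mpr hi.1, Nat.le_floor hi.2⟩) hf.injOn
    rw [Nat.card_Icc] at hcard
    rcases Nat.eq_zero_or_pos #{i | x ≤ f i ∧ (f i : ℝ) ≤ y} with h | h
    · rw [h]
      push_cast
      linarith
    have : #{i | x ≤ f i ∧ (f i : ℝ) ≤ y} + ⌈x⌉₊ ≤ ⌊y⌋₊ + 1 := by omega
    have hcast : (#{i | x ≤ f i ∧ (f i : ℝ) ≤ y} : ℝ) + ⌈x⌉₊ ≤ ⌊y⌋₊ + 1 := by exact_mod_cast this
    linarith [Nat.le_ceil x, Nat.floor_le hy]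
  · have : #{i | x ≤ f i ∧ (f i : ℝ) ≤ y} = 0 := by
      rw [card_eq_zero, filter_eq_empty_iff]
      intro i _ hi
      exact hy ((Nat.cast_nonneg _).trans hi.2)
    rw [this]
    push_cast
    linarith

lemma card_filter_abs_sub_le {f : ι → ℕ} (hf : Function.Injective f) (c : ℝ) {R : ℝ} (hR : 0 ≤ R) :
    (#{i | |c - f i| ≤ R} : ℝ) ≤ 2 * R + 1 := by
  calc (#{i | |c - f i| ≤ R} : ℝ) ≤ #{i | c - R ≤ f i ∧ (f i : ℝ) ≤ c + R} := by
        gcongr with i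
        intro h
        constructor <;> linarith [abs_le.mp h]
    _ ≤ 2 * R + 1 := by linarith [card_filter_mem_Icc_le hf (x := c - R) (y := c + R) (by linarith)]

lemma card_filter_abs_sub_mem_Ioc_le {f : ι → ℕ} (hf : Function.Injective f) (c : ℝ) {R₁ R₂ : ℝ}
    (h : R₁ ≤ R₂) : (#{i | R₁ < |c - f i| ∧ |c - f i| ≤ R₂} : ℝ) ≤ 2 * (R₂ - R₁ + 1) := by
  classical
  calc (#{i | R₁ < |c - f i| ∧ |c - f i| ≤ R₂} : ℝ)
      ≤ #(({i | c + R₁ ≤ f i ∧ (f i : ℝ) ≤ c + R₂} : Finset ι) ∪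
          ({i | c - R₂ ≤ f i ∧ (f i : ℝ) ≤ c - R₁} : Finset ι)) := by
        gcongr
        intro i
        simp only [mem_filter, mem_univ, true_and, mem_union]
        intro ⟨h₁, h₂⟩
        rcases le_total c (f i) with hc | hc
        · rw [abs_of_nonpos (by linarith)] at h₁ h₂
          left
          constructor <;> linarith
        · rw [abs_of_nonneg (by linarith)] at h₁ h₂
          right
          constructor <;> linarith
    _ ≤ #{i | c + R₁ ≤ f i ∧ (f i : ℝ) ≤ c + R₂} + #{i | c - R₂ ≤ f i ∧ (f i : ℝ) ≤ c - R₁} := by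
        exact_mod_cast card_union_le _ _
    _ ≤ 2 * (R₂ - R₁ + 1) := by
        linarith [card_filter_mem_Icc_le hf (x := c + R₁) (y := c + R₂) (by linarith),
          card_filter_mem_Icc_le hf (x := c - R₂) (y := c - R₁) (by linarith)]

lemma sum_le_of_tiers {p D : ι → ℝ} {R₁ R₂ c₁ c₂ : ℝ}
    (h₁ : ∀ i, p i ≤ c₁) (h₂ : ∀ i, R₁ < D i → p i ≤ c₂) (h₃ : ∀ i, R₂ < D i → p i ≤ 0) :
    ∑ i, p i ≤ #{i | D i ≤ R₁} * c₁ + #{i | R₁ < D i ∧ D i ≤ R₂} * c₂ := by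
  calc ∑ i, p i
      ≤ ∑ i, ((if D i ≤ R₁ then c₁ else 0) + if R₁ < D i ∧ D i ≤ R₂ then c₂ else 0) := by
        refine sum_le_sum fun i _ => ?_
        by_cases hi₁ : D i ≤ R₁
        · simp [hi₁, h₁ i, not_lt.mpr hi₁]
        by_cases hi₂ : D i ≤ R₂
        · rw [if_neg hi₁, if_pos ⟨not_le.mp hi₁, hi₂⟩, zero_add]
          exact h₂ i (not_le.mp hi₁)
        · simp [hi₁, hi₂, h₃ i (not_le.mp hi₂)]
    _ = _ := by
        rw [sum_add_distrib, ← sum_filter, ← sum_filter, sum_const, sum_const, nsmul_eq_mul,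
          nsmul_eq_mul]

end Counting

def IsGapEstimate (L t x : ℝ) : Prop :=
  (x ≤ 4 * L → |t - x| < L) ∧ (4 * L < x → 3 * L < t)

lemma isGapEstimate_of_counts {L N C g x : ℝ} (hN : 0 < N) (hC : C = g + 1)
    (h4 : x ≤ 4 * L → 2 + x * N - L * N < C ∧ C < 2 + x * N + L * N)
    (h5 : 4 * L < x → ¬ C ≤ 2 + 3 * L * N) : IsGapEstimate L ((g - 1) / N) x := by
  subst hC
  refine ⟨fun hx => ?_, fun hx => ?_⟩
  · obtain ⟨h₁, h₂⟩ := h4 hx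
    rw [abs_sub_lt_iff]
    constructor
    · rw [sub_lt_iff_lt_add, div_lt_iff₀ hN]
      nlinarith
    · rw [sub_lt_comm, lt_div_iff₀ hN]
      nlinarith
  · rw [lt_div_iff₀ hN]
    linarith [not_le.mp (h5 hx)]

lemma isGapEstimate_of_not_eventB4_B5 {n : ℕ} {L : ℝ} {rM rW : Fin n → ℝ}
    (hrM : Function.Injective rM) (hrW : Function.Injective rW) (hn : 2 < n)
    (h4 : ¬ EventB4 n L rM rW) (h5 : ¬ EventB5 n L rM rW) {a a' b b' : Fin n} (hne : a ≠ a')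
    (hb : rankOf rM a = rankOf rW b) (hb' : rankOf rM a' = rankOf rW b') :
    IsGapEstimate L ((|(rankOf rW b : ℝ) - rankOf rW b'| - 1) / ((n : ℝ) - 2)) |rM a - rM a'| ∧
      IsGapEstimate L ((|(rankOf rW b : ℝ) - rankOf rW b'| - 1) / ((n : ℝ) - 2))
        |rW b - rW b'| := by
  have hN : (0 : ℝ) < n - 2 := by
    have : (2 : ℝ) < n := by exact_mod_cast hn
    linarith
  have hbb' : b ≠ b' := fun h => hne (rankOf_injective hrM (by rw [hb, hb', h]))
  refine ⟨isGapEstimate_of_counts hN (C := countBetween rM (rM a) (rM a')) ?_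
      (fun hx => ?_) (fun hx hc => ?_),
    isGapEstimate_of_counts hN (countBetween_eq_abs_sub hrW hbb') (fun hx => ?_)
      (fun hx hc => ?_)⟩
  · rw [countBetween_eq_abs_sub hrM hne, hb, hb']
  · by_contra hc
    exact h4 ⟨a, a', b, b', hne, hb, hb', Or.inl ⟨hx, hc⟩⟩
  · exact h5 ⟨a, a', b, b', hne, hb, hb', Or.inr ⟨hx, hc⟩⟩
  · by_contra hc
    exact h4 ⟨a, a', b, b', hne, hb, hb', Or.inr ⟨hx, hc⟩⟩
  · exact h5 ⟨a, a', b, b', hne, hb, hb', Or.inl ⟨hx, hc⟩⟩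

lemma mul_le_of_isGapEstimate {L t x y A B : ℝ} (hx0 : 0 ≤ x)
    (hx : IsGapEstimate L t x) (hy : IsGapEstimate L t y)
    (hA : A ≤ max (2 * L + y) 0) (hB0 : 0 ≤ B) (hB : B ≤ max (2 * L - x) 0) :
    A * B ≤ max (9 * L ^ 2 - t ^ 2) 0 := by
  rcases hB0.eq_or_lt with rfl | hBpos
  · simp
  have hx2 : x < 2 * L := by
    by_contra! h
    linarith [hB.trans_eq (max_eq_right (by linarith : 2 * L - x ≤ 0))]
  obtain ⟨htx₁, htx₂⟩ := abs_sub_lt_iff.mp (hx.1 (by linarith))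
  have hy4 : y ≤ 4 * L := by
    by_contra! h
    linarith [hy.2 h]
  obtain ⟨hty₁, hty₂⟩ := abs_sub_lt_iff.mp (hy.1 hy4)
  calc A * B ≤ (3 * L + t) * (3 * L - t) :=
        mul_le_mul (hA.trans (max_le (by linarith) (by linarith)))
          (hB.trans (max_le (by linarith) (by linarith))) hB0 (by linarith)
    _ = 9 * L ^ 2 - t ^ 2 := by ring
    _ ≤ _ := le_max_left _ _

lemma mul_le_of_isGapEstimate_abs {L t X Y P Q : ℝ} (hXY : 0 < X * Y)
    (hX : IsGapEstimate L t |X|) (hY : IsGapEstimate L t |Y|)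
    (hP0 : 0 ≤ P) (hP : P ≤ max (2 * L - Y) 0) (hQ0 : 0 ≤ Q) (hQ : Q ≤ max (2 * L + X) 0) :
    P * Q ≤ max (9 * L ^ 2 - t ^ 2) 0 := by
  rcases mul_pos_iff.mp hXY with ⟨hXpos, hYpos⟩ | ⟨hXneg, hYneg⟩
  · rw [abs_of_pos hXpos] at hX
    rw [abs_of_pos hYpos] at hY
    rw [mul_comm]
    exact mul_le_of_isGapEstimate hYpos.le hY hX hQ hP0 hP
  · rw [abs_of_neg hXneg] at hX
    rw [abs_of_neg hYneg] at hY
    rw [← sub_neg_eq_add] at hQ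
    rw [sub_eq_add_neg] at hP
    exact mul_le_of_isGapEstimate (by linarith) hX hY hP hQ0 hQ

instance : IsProbabilityMeasure unif :=
  ⟨by simp [unif]⟩

instance (n : ℕ) : IsProbabilityMeasure (scoresMeasure n) := by
  unfold scoresMeasure
  infer_instance

lemma unif_real_Ici_le (c : ℝ) : unif.real (Set.Ici c) ≤ max (1 - c) 0 := by
  have : unif (Set.Ici c) ≤ volume (Set.Icc c 1) := by
    rw [unif, Measure.restrict_apply' measurableSet_Icc]
    exact measure_mono fun x ⟨hc, _, h1⟩ => ⟨hc, h1⟩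
  rw [Real.volume_Icc] at this
  calc unif.real (Set.Ici c) ≤ (ENNReal.ofReal (1 - c)).toReal :=
        ENNReal.toReal_mono ENNReal.ofReal_ne_top this
    _ = max (1 - c) 0 := ENNReal.toReal_ofReal'

lemma measurePreserving_scorePairs {n : ℕ} (a : Fin n) :
    MeasurePreserving (fun s : (Fin n → Fin n → ℝ) × (Fin n → Fin n → ℝ) =>
      fun b => (s.1 a b, s.2 b a)) (scoresMeasure n) (Measure.pi fun _ => unif.prod unif) := by
  have h₁ : MeasurePreserving (fun f : Fin n → Fin n → ℝ => f a)
      (Measure.pi fun _ => Measure.pi fun _ => unif) (Measure.pi fun _ => unif) :=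
    measurePreserving_eval _ a
  have h₂ : MeasurePreserving (fun (g : Fin n → Fin n → ℝ) b => g b a)
      (Measure.pi fun _ => Measure.pi fun _ => unif) (Measure.pi fun _ => unif) :=
    measurePreserving_pi _ _ fun _ => measurePreserving_eval _ a
  exact (measurePreserving_arrowProdEquivProdArrow ℝ ℝ (Fin n) (fun _ => unif)
    (fun _ => unif)).symm.comp (h₁.prod h₂)

lemma measurableSet_forall_or {n : ℕ} (a : Fin n) (α β : Fin n → ℝ) :
    MeasurableSet {s : (Fin n → Fin n → ℝ) × (Fin n → Fin n → ℝ) |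
      ∀ b, s.1 a b < α b ∨ s.2 b a < β b} := by
  simp only [Set.ofPred_forall, Set.ofPred_or]
  exact .iInter fun b => (measurableSet_lt (by fun_prop) measurable_const).union
    (measurableSet_lt (by fun_prop) measurable_const)

lemma scoresMeasure_real_forall_or {n : ℕ} (a : Fin n) (α β : Fin n → ℝ) :
    (scoresMeasure n).real {s | ∀ b, s.1 a b < α b ∨ s.2 b a < β b}
      = ∏ b, (1 - unif.real (Set.Ici (α b)) * unif.real (Set.Ici (β b))) := by
  have hmeas : ∀ b, MeasurableSet (Set.Ici (α b) ×ˢ Set.Ici (β b)) := fun b =>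
    measurableSet_Ici.prod measurableSet_Ici
  calc (scoresMeasure n).real {s | ∀ b, s.1 a b < α b ∨ s.2 b a < β b}
      = (Measure.pi fun _ => unif.prod unif).real
          (Set.univ.pi fun b => (Set.Ici (α b) ×ˢ Set.Ici (β b))ᶜ) := by
        rw [← (measurePreserving_scorePairs a).measureReal_preimage
          (MeasurableSet.univ_pi fun b => (hmeas b).compl).nullMeasurableSet]
        congr 1
        ext s
        simp [or_iff_not_imp_left]
    _ = ∏ b, (unif.prod unif).real (Set.Ici (α b) ×ˢ Set.Ici (β b))ᶜ := by
        simp only [Measure.real, Measure.pi_pi, ENNReal.toReal_prod]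
    _ = _ := by
        simp only [probReal_compl_eq_one_sub (hmeas _), measureReal_prod_prod]

lemma integral_natCard_eq_sum_measureReal {Ω ι : Type*} [MeasurableSpace Ω] [Fintype ι]
    (μ : Measure Ω) [IsFiniteMeasure μ] {E : ι → Set Ω} (hE : ∀ i, MeasurableSet (E i)) :
    ∫ ω, (Nat.card {i // ω ∈ E i} : ℝ) ∂μ = ∑ i, μ.real (E i) := by
  classical
  have hcard : ∀ ω, (Nat.card {i // ω ∈ E i} : ℝ) = ∑ i, (E i).indicator 1 ω := by
    intro ω
    simp [Nat.card_eq_fintype_card, Fintype.card_subtype, Set.indicator_apply]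
  simp_rw [hcard]
  rw [integral_finsetSum _ fun i _ => (integrable_const 1).indicator (hE i)]
  simp_rw [integral_indicator_one (hE _)]

lemma four_le_log {x : ℝ} (hx : 100 ≤ x) : 4 ≤ log x := by
  rw [le_log_iff_exp_le (by linarith)]
  calc exp 4 = exp 1 ^ 4 := by rw [← exp_nat_mul]; norm_num
    _ ≤ 2.7182818286 ^ 4 := by gcongr; exact exp_one_lt_d9.le
    _ ≤ x := by norm_num; linarith

lemma log_div_self_le {x : ℝ} (hx : 100 ≤ x) : log x / x ≤ 1 / 5 := by
  have hsqrt : 10 ≤ √x := le_sqrt_of_sq_le (by linarith)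
  have hlog : log x ≤ 2 * √x := by
    have := log_le_rpow_div (by linarith : (0:ℝ) ≤ x) (by norm_num : (0:ℝ) < 1 / 2)
    rw [sqrt_eq_rpow]
    linarith
  rw [div_le_iff₀ (by linarith)]
  nlinarith [mul_self_sqrt (by linarith : (0:ℝ) ≤ x)]

lemma tier_sum_le {x ℓ u L : ℝ} (hx : 100 ≤ x) (hℓ : 4 ≤ ℓ) (hu : u ^ 3 * x = ℓ)
    (hL : 0 < L) (hLu : L ≤ u / 8) :
    111 / 100 * ((4 * L * (x - 2) + 3) * (9 * L ^ 2) + (2 * L * (x - 2) + 2) * (5 * L ^ 2))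
      ≤ ℓ / 8 := by
  have hu0 : 0 < u := by linarith
  have hux : 34 ≤ u * x := by
    have : (34 : ℝ) ^ 3 ≤ (u * x) ^ 3 := by
      calc (34 : ℝ) ^ 3 ≤ 4 * 100 ^ 2 := by norm_num
        _ ≤ ℓ * x ^ 2 := by gcongr
        _ = (u * x) ^ 3 := by rw [← hu]; ring
    exact le_of_pow_le_pow_left₀ (by norm_num) (by positivity) this
  have hL2 : L ^ 2 ≤ u ^ 2 / 64 := by nlinarith
  have hL3 : L ^ 3 ≤ u ^ 3 / 512 := by
    calc L ^ 3 ≤ (u / 8) ^ 3 := by gcongr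
      _ = u ^ 3 / 512 := by ring
  have hu2 : u ^ 2 ≤ ℓ / 34 := by rw [← hu]; nlinarith
  nlinarith

lemma nine_sq_le_and_tier_sum_le {n : ℕ} {L : ℝ} (hn : 100 ≤ n) (hL : 0 < L)
    (hLle : L ≤ (1/8) * (log n / n) ^ ((1:ℝ)/3)) :
    9 * L ^ 2 ≤ 11 / 111 ∧
      111 / 100 * ((4 * L * ((n:ℝ) - 2) + 3) * (9 * L ^ 2) +
        (2 * L * ((n:ℝ) - 2) + 2) * (5 * L ^ 2)) ≤ log n / 8 := by
  have hx : (100:ℝ) ≤ n := by exact_mod_cast hn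
  have hu3 : ((log n / n) ^ ((1:ℝ)/3)) ^ 3 = log n / n := by
    rw [show ((1:ℝ)/3) = ((3:ℕ) : ℝ)⁻¹ by norm_num]
    exact rpow_inv_natCast_pow (div_nonneg (log_nonneg (by linarith)) (by linarith)) (by norm_num)
  set u := (log n / n) ^ ((1:ℝ)/3)
  have hu0 : 0 ≤ u := by positivity
  have hu : u ≤ 3 / 5 := by
    by_contra! h
    have : (3 / 5 : ℝ) ^ 3 < u ^ 3 := by gcongr
    linarith [log_div_self_le hx]
  refine ⟨by nlinarith, tier_sum_le (u := u) hx (four_le_log hx) ?_ hL (by linarith)⟩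
  rw [hu3, div_mul_cancel₀ _ (by positivity)]

lemma exp_neg_le_one_sub {p : ℝ} (h0 : 0 ≤ p) (h1 : p ≤ 11 / 111) :
    exp (-(111 / 100 * p)) ≤ 1 - p := by
  rw [exp_neg, inv_le_iff_one_le_mul₀ (exp_pos _)]
  nlinarith [add_one_le_exp (111 / 100 * p)]

lemma exp_neg_sum_le_prod_one_sub {ι : Type*} [Fintype ι] {p : ι → ℝ} (h0 : ∀ i, 0 ≤ p i)
    (h1 : ∀ i, p i ≤ 11 / 111) : exp (-(111 / 100 * ∑ i, p i)) ≤ ∏ i, (1 - p i) := by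
  rw [mul_sum, ← sum_neg_distrib, exp_sum]
  exact prod_le_prod (fun i _ => (exp_pos _).le) fun i _ => exp_neg_le_one_sub (h0 i) (h1 i)

lemma forall_loss_gt_iff {n : ℕ} {L : ℝ} {rM rW : Fin n → ℝ} (hrM : Function.Injective rM)
    (hrW : Function.Injective rW) (s : (Fin n → Fin n → ℝ) × (Fin n → Fin n → ℝ)) (a : Fin n) :
    (∀ b b₀ a' : Fin n, rankOf rM a = rankOf rW b₀ → rankOf rM a' = rankOf rW b →
      (L < (rW b₀ + 1)/2 - (rW b + s.1 a b)/2 ∨ L < (rM a' + 1)/2 - (rM a + s.2 b a)/2)) ↔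
    ∀ b, s.1 a b < rW (alignment hrM hrW a) - rW b + 1 - 2 * L ∨
      s.2 b a < rM ((alignment hrM hrW).symm b) - rM a + 1 - 2 * L := by
  set σ := alignment hrM hrW
  simp only [rankOf_eq_rankOf_iff hrM hrW]
  refine ⟨fun h b => ?_, fun h b b₀ a' hb₀ hb => ?_⟩
  · rcases h b (σ a) (σ.symm b) rfl (σ.apply_symm_apply b).symm with h | h
    exacts [Or.inl (by linarith), Or.inr (by linarith)]
  · subst hb₀ hb
    rcases h (σ a') with h | h
    · exact Or.inl (by linarith)
    · rw [σ.symm_apply_apply] at h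
      exact Or.inr (by linarith)

section Acceptance

variable {n : ℕ} {L : ℝ} {rM rW : Fin n → ℝ}

/-- The probability that the match `(a, b)` gives both `a` and `b` a loss of at most `L`, when
`σ` aligns men with women. -/
def acceptProb (L : ℝ) (rM rW : Fin n → ℝ) (σ : Fin n ≃ Fin n) (a b : Fin n) : ℝ :=
  unif.real (Set.Ici (rW (σ a) - rW b + 1 - 2 * L)) *
    unif.real (Set.Ici (rM (σ.symm b) - rM a + 1 - 2 * L))

lemma acceptProb_nonneg (σ : Fin n ≃ Fin n) (a b : Fin n) : 0 ≤ acceptProb L rM rW σ a b :=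
  mul_nonneg measureReal_nonneg measureReal_nonneg

lemma acceptProb_self_le (hL : 0 ≤ L) (σ : Fin n ≃ Fin n) (a : Fin n) :
    acceptProb L rM rW σ a (σ a) ≤ 4 * L ^ 2 := by
  have hle : ∀ c, c = 1 - 2 * L → unif.real (Set.Ici c) ≤ 2 * L := fun c hc =>
    (unif_real_Ici_le c).trans (max_le (by linarith) (by linarith))
  calc acceptProb L rM rW σ a (σ a) ≤ (2 * L) * (2 * L) :=
        mul_le_mul (hle _ (by ring)) (hle _ (by rw [σ.symm_apply_apply]; ring))
          measureReal_nonneg (by linarith)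
    _ = 4 * L ^ 2 := by ring

variable (hrM : Function.Injective rM) (hrW : Function.Injective rW)
  (h4 : ¬ EventB4 n L rM rW) (h5 : ¬ EventB5 n L rM rW)
include hrM hrW h4 h5

lemma acceptProb_le_of_ne (hn : 2 < n) {a b : Fin n}
    (hb : b ≠ alignment hrM hrW a) :
    acceptProb L rM rW (alignment hrM hrW) a b ≤ max (9 * L ^ 2 -
      ((|(rankOf rW (alignment hrM hrW a) : ℝ) - rankOf rW b| - 1) / ((n : ℝ) - 2)) ^ 2) 0 := by
  set σ := alignment hrM hrW
  have hne : a ≠ σ.symm b := fun h => hb (by rw [h, σ.apply_symm_apply])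
  have ha : rankOf rM a = rankOf rW (σ a) := (rankOf_eq_rankOf_iff hrM hrW).mpr rfl
  have ha' : rankOf rM (σ.symm b) = rankOf rW b :=
    (rankOf_eq_rankOf_iff hrM hrW).mpr (σ.apply_symm_apply b).symm
  obtain ⟨hX, hY⟩ := isGapEstimate_of_not_eventB4_B5 hrM hrW hn h4 h5 hne ha ha'
  have hXY : 0 < (rM a - rM (σ.symm b)) * (rW (σ a) - rW b) := by
    have hiff : rM (σ.symm b) < rM a ↔ rW b < rW (σ a) := by
      rw [← rankOf_lt_rankOf_iff hrM, ← rankOf_lt_rankOf_iff hrW, ha, ha']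
    rcases (hrM.ne hne).lt_or_gt with h | h
    · have : rW (σ a) < rW b :=
        (not_lt.mp (hiff.not.mp h.not_gt)).lt_of_ne (hrW.ne (Ne.symm hb))
      exact mul_pos_of_neg_of_neg (by linarith) (by linarith)
    · exact mul_pos (by linarith) (by linarith [hiff.mp h])
  refine mul_le_of_isGapEstimate_abs hXY hX hY measureReal_nonneg
    ((unif_real_Ici_le _).trans_eq ?_) measureReal_nonneg ((unif_real_Ici_le _).trans_eq ?_) <;>
  · congr 1
    ring

lemma acceptProb_le (hL : 0 ≤ L) (hn : 2 < n) (a b : Fin n) :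
    acceptProb L rM rW (alignment hrM hrW) a b ≤ 9 * L ^ 2 := by
  by_cases hb : b = alignment hrM hrW a
  · rw [hb]
    linarith [acceptProb_self_le (rM := rM) (rW := rW) hL (alignment hrM hrW) a, sq_nonneg L]
  · exact (acceptProb_le_of_ne hrM hrW h4 h5 hn hb).trans
      (max_le (by nlinarith) (by positivity))

lemma sum_acceptProb_le (hL : 0 ≤ L) (hn : 2 < n) (a : Fin n) :
    ∑ b, acceptProb L rM rW (alignment hrM hrW) a b
      ≤ (4 * L * ((n:ℝ) - 2) + 3) * (9 * L ^ 2) + (2 * L * ((n:ℝ) - 2) + 2) * (5 * L ^ 2) := by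
  set σ := alignment hrM hrW
  set D : Fin n → ℝ := fun b => |(rankOf rW (σ a) : ℝ) - rankOf rW b|
  have hN : (0 : ℝ) < n - 2 := by
    have : (2 : ℝ) < n := by exact_mod_cast hn
    linarith
  have hD : ∀ b, 1 < D b → b ≠ σ a := by
    rintro b hb rfl
    simp only [D, sub_self, abs_zero] at hb
    linarith
  have h₂ : ∀ b, 2 * L * (n - 2) + 1 < D b → acceptProb L rM rW σ a b ≤ 5 * L ^ 2 := by
    intro b hb
    have ht : 2 * L < (D b - 1) / (n - 2) := by
      rw [lt_div_iff₀ hN]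
      linarith
    refine (acceptProb_le_of_ne hrM hrW h4 h5 hn (hD b (by nlinarith))).trans
      (max_le (by nlinarith) (by positivity))
  have h₃ : ∀ b, 3 * L * (n - 2) + 1 < D b → acceptProb L rM rW σ a b ≤ 0 := by
    intro b hb
    have ht : 3 * L < (D b - 1) / (n - 2) := by
      rw [lt_div_iff₀ hN]
      linarith
    refine (acceptProb_le_of_ne hrM hrW h4 h5 hn (hD b (by nlinarith))).trans
      (max_le (by nlinarith) le_rfl)
  have hinj := rankOf_injective hrW
  calc ∑ b, acceptProb L rM rW σ a b
      ≤ #{b | D b ≤ 2 * L * (n - 2) + 1} * (9 * L ^ 2) +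
          #{b | 2 * L * (n - 2) + 1 < D b ∧ D b ≤ 3 * L * (n - 2) + 1} * (5 * L ^ 2) :=
        sum_le_of_tiers (acceptProb_le hrM hrW h4 h5 hL hn a) h₂ h₃
    _ ≤ (2 * (2 * L * (n - 2) + 1) + 1) * (9 * L ^ 2) +
          2 * ((3 * L * (n - 2) + 1) - (2 * L * (n - 2) + 1) + 1) * (5 * L ^ 2) := by
        gcongr
        · exact card_filter_abs_sub_le hinj _ (by positivity)
        · exact card_filter_abs_sub_mem_Ioc_le hinj _ (by nlinarith)
    _ = _ := by ring

lemma rpow_le_measureReal_blocked (hn : 100 ≤ n) (hL : 0 < L)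
    (hLle : L ≤ (1/8) * (log n / n) ^ ((1:ℝ)/3)) (a : Fin n) :
    (n : ℝ) ^ (-(1:ℝ)/8) ≤ (scoresMeasure n).real {s | ∀ b,
      s.1 a b < rW (alignment hrM hrW a) - rW b + 1 - 2 * L ∨
        s.2 b a < rM ((alignment hrM hrW).symm b) - rM a + 1 - 2 * L} := by
  obtain ⟨h9, hsum⟩ := nine_sq_le_and_tier_sum_le hn hL hLle
  have hn2 : 2 < n := by omega
  rw [scoresMeasure_real_forall_or]
  calc (n : ℝ) ^ (-(1:ℝ)/8) = exp (-(log n / 8)) := by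
        rw [rpow_def_of_pos (by positivity)]
        ring_nf
    _ ≤ exp (-(111 / 100 * ∑ b, acceptProb L rM rW (alignment hrM hrW) a b)) :=
        exp_le_exp.mpr (by linarith [sum_acceptProb_le hrM hrW h4 h5 hL.le hn2 a])
    _ ≤ _ := exp_neg_sum_le_prod_one_sub (fun b => acceptProb_nonneg _ a b)
        fun b => (acceptProb_le hrM hrW h4 h5 hL.le hn2 a b).trans h9

end Acceptance

/-- Suppose `n ≥ 100`, `0 < L ≤ (1/8)(ln n/n)^(1/3)`, and the
(distinct) public ratings avoid B4 and B5. Then the expectation, over the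
independent uniform private scores `s = (s^M, s^W)`, of the number of men `m_i`
(here indexed by `a`, with aligned woman `b₀`) such that for every woman `b`
(whose aligned man is `a'`) the match `(a, b)` gives `a` a loss exceeding `L`
or gives `b` a loss exceeding `L`, is at least `n^(7/8)`. -/
theorem stmt16 (n : ℕ) (hn : 100 ≤ n) (L : ℝ) (hL : 0 < L)
    (hLle : L ≤ (1/8) * (Real.log n / n) ^ ((1:ℝ)/3))
    (rM rW : Fin n → ℝ)
    (hrM : Function.Injective rM) (hrW : Function.Injective rW)
    (h4 : ¬ EventB4 n L rM rW) (h5 : ¬ EventB5 n L rM rW) :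
    (n : ℝ) ^ ((7:ℝ)/8) ≤
    ∫ s : (Fin n → Fin n → ℝ) × (Fin n → Fin n → ℝ),
      (Nat.card {a : Fin n // ∀ b b₀ a' : Fin n,
        rankOf rM a = rankOf rW b₀ → rankOf rM a' = rankOf rW b →
        (L < (rW b₀ + 1)/2 - (rW b + s.1 a b)/2 ∨
         L < (rM a' + 1)/2 - (rM a + s.2 b a)/2)} : ℝ)
      ∂ (scoresMeasure n) := by
  calc (n : ℝ) ^ ((7:ℝ)/8) = ∑ _a : Fin n, (n : ℝ) ^ (-(1:ℝ)/8) := by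
        rw [sum_const, card_univ, Fintype.card_fin, nsmul_eq_mul,
          show ((7:ℝ)/8) = 1 + -(1:ℝ)/8 by norm_num, rpow_add (by positivity), rpow_one]
    _ ≤ _ := sum_le_sum fun a _ => rpow_le_measureReal_blocked hrM hrW h4 h5 hn hL hLle a
    _ = _ := by
        rw [← integral_natCard_eq_sum_measureReal _ fun a => measurableSet_forall_or a _ _]
        simp_rw [forall_loss_gt_iff hrM hrW]
        rfl

end
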